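/- arXiv:1103.2736 — 4 statements merged into one kernel-verified Lean document; each statement's English description precedes it below -/
import Mathlib

section
/- Let Q be a finite symmetric quiver with a_{ii} ≥ 1 for all i ∈ I, and let γ ∈ ℤ_{≥0}^I. Then the ideal J_γ ⊆ A_γ^{prim} has finite codimension, i.e. the quotient A_γ^{prim}/J_γ is a finite-dimensional ℚ-vector space. -/
open MvPolynomial

namespace COHA

variable {I : Type} [Fintype I] [DecidableEq I]

/-- Variables `x_{i,α}`, `i ∈ I`, `1 ≤ α ≤ γ i`. -/
abbrev Vars (γ : I → ℕ) : Type := Σ i : I, Fin (γ i)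

/-- The polynomial ring `A_γ = ℚ[x_{i,α}]`. -/
abbrev Amod (γ : I → ℕ) : Type := MvPolynomial (Vars γ) ℚ

/-- A tuple of permutations `σ ∈ P_γ = ∏_i S_{γ^i}` acting on the variables. -/
def permEquiv {γ : I → ℕ} (σ : ∀ i, Equiv.Perm (Fin (γ i))) : Vars γ ≃ Vars γ :=
  Equiv.sigmaCongrRight σ

/-- Invariance under `P_γ`; `ℋ_γ = {f | IsSym f}`. -/
def IsSym {γ : I → ℕ} (f : Amod γ) : Prop :=
  ∀ σ : ∀ i, Equiv.Perm (Fin (γ i)), rename (permEquiv σ) f = f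

/-- The Euler form of the quiver with `a i j` arrows from `i` to `j`. -/
def chi (a : I → I → ℕ) (γ₁ γ₂ : I → ℕ) : ℤ :=
  ∑ i : I, (γ₁ i : ℤ) * (γ₂ i : ℤ) - ∑ i : I, ∑ j : I, (a i j : ℤ) * (γ₁ i : ℤ) * (γ₂ j : ℤ)

/-- `σ_γ`, the sum of all variables. -/
noncomputable def sigmaP (γ : I → ℕ) : Amod γ := ∑ v : Vars γ, X v

/-- Identification of variable sets coming from an equality of dimension vectors. -/
def castV {γ γ' : I → ℕ} (h : γ = γ') : Vars γ ≃ Vars γ' :=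
  Equiv.sigmaCongrRight fun i => finCongr (congrFun h i)

/-- Identification of polynomial rings coming from an equality of dimension vectors. -/
noncomputable def castA {γ γ' : I → ℕ} (h : γ = γ') : Amod γ → Amod γ' :=
  rename (castV h)

/-- `ℋ_γ` as a `ℚ`-submodule of `A_γ`. -/
noncomputable def Hsub (γ : I → ℕ) : Submodule ℚ (Amod γ) where
  carrier := {f | IsSym f}
  add_mem' := fun {f g} hf hg σ => by rw [map_add, hf σ, hg σ]
  zero_mem' := fun σ => map_zero _
  smul_mem' := fun c f hf σ => by rw [map_smul, hf σ]

/-- `ℋ_γ` as a `ℚ`-subalgebra of `A_γ`. -/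
noncomputable def Halg (γ : I → ℕ) : Subalgebra ℚ (Amod γ) where
  carrier := {f | IsSym f}
  mul_mem' := fun {f g} hf hg σ => by rw [map_mul, hf σ, hg σ]
  one_mem' := fun σ => map_one _
  add_mem' := fun {f g} hf hg σ => by rw [map_add, hf σ, hg σ]
  zero_mem' := fun σ => map_zero _
  algebraMap_mem' := fun r σ => by
    simp [MvPolynomial.algebraMap_eq]
/-- Inclusion of the first block of variables. -/
def inlV {γ₁ γ₂ : I → ℕ} : Vars γ₁ → Vars (γ₁ + γ₂) :=
  fun v => ⟨v.1, Fin.castAdd (γ₂ v.1) v.2⟩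

/-- Inclusion of the second block of variables. -/
def inrV {γ₁ γ₂ : I → ℕ} : Vars γ₂ → Vars (γ₁ + γ₂) :=
  fun v => ⟨v.1, Fin.natAdd (γ₁ v.1) v.2⟩

/-- The numerator `∏_{i,j} ∏_{α₁,α₂} (x''_{j,α₂} - x'_{i,α₁})^(a i j)` of the
Kontsevich–Soibelman kernel. -/
noncomputable def shuffleNum (a : I → I → ℕ) (γ₁ γ₂ : I → ℕ) : Amod (γ₁ + γ₂) :=
  ∏ i : I, ∏ j : I, ∏ α₁ : Fin (γ₁ i), ∏ α₂ : Fin (γ₂ j),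
    (X (inrV (γ₁ := γ₁) ⟨j, α₂⟩) - X (inlV (γ₂ := γ₂) ⟨i, α₁⟩)) ^ (a i j)

/-- The denominator `∏_i ∏_{α₁,α₂} (x''_{i,α₂} - x'_{i,α₁})` of the
Kontsevich–Soibelman kernel. -/
noncomputable def shuffleDen (γ₁ γ₂ : I → ℕ) : Amod (γ₁ + γ₂) :=
  ∏ i : I, ∏ α₁ : Fin (γ₁ i), ∏ α₂ : Fin (γ₂ i),
    (X (inrV (γ₁ := γ₁) ⟨i, α₂⟩) - X (inlV (γ₂ := γ₂) ⟨i, α₁⟩))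

/-- `σ` is an `(n₁, n₂)`-shuffle: it is increasing on the two blocks. -/
def IsShuffle (n₁ n₂ : ℕ) (σ : Equiv.Perm (Fin (n₁ + n₂))) : Prop :=
  (∀ p q : Fin n₁, p < q → σ (Fin.castAdd n₂ p) < σ (Fin.castAdd n₂ q)) ∧
  (∀ p q : Fin n₂, p < q → σ (Fin.natAdd n₁ p) < σ (Fin.natAdd n₁ q))

open Classical in
/-- The sum, over all tuples of shuffles, of the permuted rational functions
`f₁(x') f₂(x'') ∏ (x''-x')^(a i j) / ∏ (x''-x')`, as an element of the fraction
field of `A_{γ₁+γ₂}`. -/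
noncomputable def shuffleSum (a : I → I → ℕ) (γ₁ γ₂ : I → ℕ)
    (f₁ : Amod γ₁) (f₂ : Amod γ₂) : FractionRing (Amod (γ₁ + γ₂)) :=
  ∑ σ : ∀ i : I, Equiv.Perm (Fin (γ₁ i + γ₂ i)),
    if ∀ i : I, IsShuffle (γ₁ i) (γ₂ i) (σ i) then
      algebraMap (Amod (γ₁ + γ₂)) _
          (rename (permEquiv (γ := γ₁ + γ₂) σ)
            (rename (inlV (γ₂ := γ₂)) f₁ * rename (inrV (γ₁ := γ₁)) f₂ *
              shuffleNum a γ₁ γ₂)) /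
        algebraMap (Amod (γ₁ + γ₂)) _
          (rename (permEquiv (γ := γ₁ + γ₂) σ) (shuffleDen γ₁ γ₂))
    else 0

open Classical in
/-- The Kontsevich–Soibelman shuffle product `f₁ · f₂ ∈ ℋ_{γ₁+γ₂}`: the unique
polynomial mapping to `shuffleSum` in the fraction field. -/
noncomputable def shuffleMul (a : I → I → ℕ) {γ₁ γ₂ : I → ℕ}
    (f₁ : Amod γ₁) (f₂ : Amod γ₂) : Amod (γ₁ + γ₂) :=
  if h : ∃ p : Amod (γ₁ + γ₂),
      algebraMap (Amod (γ₁ + γ₂)) (FractionRing (Amod (γ₁ + γ₂))) p =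
        shuffleSum a γ₁ γ₂ f₁ f₂
  then h.choose else 0
/-- `A_γ^{prim}`: the subalgebra generated by all differences of variables. -/
noncomputable def Aprim (γ : I → ℕ) : Subalgebra ℚ (Amod γ) :=
  Algebra.adjoin ℚ {f : Amod γ | ∃ u v : Vars γ, f = X u - X v}

/-- For a decomposition `γ = γ₁ + γ₂`, the polynomial
`F_{γ₁,γ₂} = ∏_{i,j} ∏ (x''-x')^(a i j) / ∏_i ∏ (x''-x')`
(written as a polynomial, assuming `a i i ≥ 1`). -/
noncomputable def Fpoly (a : I → I → ℕ) (γ₁ γ₂ : I → ℕ) : Amod (γ₁ + γ₂) :=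
  ∏ i : I, ∏ j : I, ∏ α₁ : Fin (γ₁ i), ∏ α₂ : Fin (γ₂ j),
    (X (inrV (γ₁ := γ₁) ⟨j, α₂⟩) - X (inlV (γ₂ := γ₂) ⟨i, α₁⟩)) ^
      (if i = j then a i i - 1 else a i j)

/-- Generators of `J_γ`: the `P_γ`-orbits of all `F_{γ₁,γ₂}`. -/
def Jgen (a : I → I → ℕ) (γ : I → ℕ) : Set ↥(Aprim (I := I) γ) :=
  {g | ∃ (γ₁ γ₂ : I → ℕ) (_ : γ₁ ≠ 0) (_ : γ₂ ≠ 0) (h : γ₁ + γ₂ = γ)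
        (σ : ∀ i, Equiv.Perm (Fin (γ i))),
      (g : Amod γ) = rename (permEquiv σ) (castA h (Fpoly a γ₁ γ₂))}

/-- The ideal `J_γ ⊆ A_γ^{prim}`. -/
noncomputable def Jideal (a : I → I → ℕ) (γ : I → ℕ) : Ideal ↥(Aprim (I := I) γ) :=
  Ideal.span (Jgen a γ)

/-- Twice `N_γ(Q) - 2 + Σ_i γ^i`:
`Σ_{i≠j} a_ij γ^i γ^j + Σ_i max(a_ii - 1, 0) γ^i (γ^i - 1)`. -/
def Nnum (a : I → I → ℕ) (γ : I → ℕ) : ℕ :=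
  (∑ i : I, ∑ j : I, if i = j then 0 else a i j * γ i * γ j) +
    ∑ i : I, (a i i - 1) * γ i * (γ i - 1)

/-- The bound `N_γ(Q)`. -/
def NQ (a : I → I → ℕ) (γ : I → ℕ) : ℤ :=
  ((Nnum a γ / 2 : ℕ) : ℤ) - (∑ i : I, (γ i : ℤ)) + 2

/-! The differences `x_u - x_v` generate `A_γ^{prim}`, so it suffices that each of them is
nilpotent modulo `J_γ`, i.e. lies in every prime `𝔭 ⊇ J_γ`. If `x_u - x_v ∉ 𝔭`, sort the
variables by whether `x_w - x_v ∈ 𝔭`: this is a decomposition `γ = γ₁ + γ₂` with both parts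
nonzero, and after a permutation placing the first class in the first block, no factor
`x'' - x'` of `F_{γ₁,γ₂}` lies in `𝔭`, so neither does the corresponding generator of `J_γ`.
A finitely generated algebra generated by nilpotent elements is finite-dimensional. -/

end COHA

theorem Ideal.finite_quotient_of_adjoin_eq_top_of_subset_radical {R A : Type*} [CommRing R]
    [CommRing A] [Algebra R A] {s : Set A} (hs : s.Finite) (hgen : Algebra.adjoin R s = ⊤)
    {J : Ideal A} (hJ : s ⊆ J.radical) : Module.Finite R (A ⧸ J) := by
  set π := Ideal.Quotient.mkₐ R J
  have hπgen : Algebra.adjoin R (π '' s) = ⊤ := by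
    rw [Algebra.adjoin_image, hgen, Algebra.map_top, AlgHom.range_eq_top]
    exact Ideal.Quotient.mkₐ_surjective R J
  have hint : ∀ x ∈ π '' s, IsIntegral R x := by
    rintro _ ⟨x, hx, rfl⟩
    obtain ⟨n, hn⟩ := hJ hx
    have hnil : π x ^ n = 0 := by rw [← map_pow]; exact Ideal.Quotient.eq_zero_iff_mem.2 hn
    refine IsIntegral.of_pow n.succ_pos ?_
    rw [pow_succ, hnil, zero_mul]
    exact isIntegral_zero
  rw [Module.finite_def, ← Algebra.top_toSubmodule, ← hπgen]
  exact fg_adjoin_of_finite (hs.image π) hint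

theorem exists_equiv_fin_card_add_card {α : Type*} [Fintype α] (p : α → Prop)
    [DecidablePred p] :
    ∃ e : Fin (Fintype.card {x // ¬ p x} + Fintype.card {x // p x}) ≃ α,
      (∀ k, ¬ p (e (Fin.castAdd _ k))) ∧ ∀ k, p (e (Fin.natAdd _ k)) := by
  let eN := (Fintype.equivFin {x // ¬ p x}).symm
  let eP := (Fintype.equivFin {x // p x}).symm
  refine ⟨finSumFinEquiv.symm.trans <| (Equiv.sumCongr eN eP).trans <|
    (Equiv.sumComm _ _).trans (Equiv.sumCompl p), fun k => ?_, fun k => ?_⟩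
  · simpa using (eN k).2
  · simpa using (eP k).2

namespace COHA

section

variable {I : Type} {γ : I → ℕ}

theorem exists_perm_separating {P : Vars γ → Prop} {w₁ w₂ : Vars γ} (h₁ : ¬ P w₁) (h₂ : P w₂) :
    ∃ (γ₁ γ₂ : I → ℕ) (_ : γ₁ ≠ 0) (_ : γ₂ ≠ 0) (h : γ₁ + γ₂ = γ)
      (σ : ∀ i, Equiv.Perm (Fin (γ i))),
      (∀ v, ¬ P (permEquiv σ (castV h (inlV v)))) ∧ ∀ v, P (permEquiv σ (castV h (inrV v))) := by
  classical
  choose e he using fun i => exists_equiv_fin_card_add_card fun α : Fin (γ i) => P ⟨i, α⟩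
  have h : (fun i => Fintype.card {α // ¬ P ⟨i, α⟩}) + (fun i => Fintype.card {α // P ⟨i, α⟩})
      = γ := funext fun i => by simpa using Fintype.card_congr (e i)
  refine ⟨_, _, Function.ne_iff.2 ⟨w₁.1, (Fintype.card_pos_iff.2 ⟨⟨w₁.2, h₁⟩⟩).ne'⟩,
    Function.ne_iff.2 ⟨w₂.1, (Fintype.card_pos_iff.2 ⟨⟨w₂.2, h₂⟩⟩).ne'⟩, h,
    fun i => (finCongr (congrFun h i)).symm.trans (e i),
    fun ⟨i, k⟩ => (he i).1 k, fun ⟨i, k⟩ => (he i).2 k⟩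

noncomputable def diff (u v : Vars γ) : Aprim γ :=
  ⟨X u - X v, Algebra.subset_adjoin ⟨u, v, rfl⟩⟩

@[simp]
theorem diff_self (u : Vars γ) : diff u u = 0 :=
  Subtype.ext (sub_self _)

theorem diff_sub_diff (u v w : Vars γ) : diff u w - diff v w = diff u v :=
  Subtype.ext (sub_sub_sub_cancel_right _ _ _)

theorem adjoin_range_diff :
    Algebra.adjoin ℚ (Set.range fun p : Vars γ × Vars γ => diff p.1 p.2) = ⊤ := by
  refine Eq.trans ?_ Algebra.adjoin_adjoin_coe_preimage
  congr 1
  ext x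
  constructor
  · rintro ⟨⟨u, v⟩, rfl⟩
    exact ⟨u, v, rfl⟩
  · rintro ⟨u, v, hx⟩
    exact ⟨⟨u, v⟩, Subtype.ext hx.symm⟩

variable [Fintype I] [DecidableEq I]

noncomputable def FpolyPrim (a : I → I → ℕ) (γ₁ γ₂ : I → ℕ) (ρ : Vars (γ₁ + γ₂) → Vars γ) :
    Aprim γ :=
  ∏ i : I, ∏ j : I, ∏ α₁ : Fin (γ₁ i), ∏ α₂ : Fin (γ₂ j),
    diff (ρ (inrV ⟨j, α₂⟩)) (ρ (inlV ⟨i, α₁⟩)) ^ (if i = j then a i i - 1 else a i j)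

theorem coe_FpolyPrim (a : I → I → ℕ) (γ₁ γ₂ : I → ℕ) (ρ : Vars (γ₁ + γ₂) → Vars γ) :
    (FpolyPrim a γ₁ γ₂ ρ : Amod γ) = rename ρ (Fpoly a γ₁ γ₂) := by
  simp only [FpolyPrim, Fpoly, diff, map_prod, map_pow, map_sub, rename_X,
    SubmonoidClass.coe_finsetProd, SubmonoidClass.coe_pow]

theorem FpolyPrim_mem_Jgen (a : I → I → ℕ) {γ₁ γ₂ : I → ℕ} (h₁ : γ₁ ≠ 0) (h₂ : γ₂ ≠ 0)
    (h : γ₁ + γ₂ = γ) (σ : ∀ i, Equiv.Perm (Fin (γ i))) :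
    FpolyPrim a γ₁ γ₂ (permEquiv σ ∘ castV h) ∈ Jgen a γ :=
  ⟨γ₁, γ₂, h₁, h₂, h, σ, by rw [coe_FpolyPrim, castA, rename_rename]⟩

theorem exists_diff_mem_of_FpolyPrim_mem {a : I → I → ℕ} {γ₁ γ₂ : I → ℕ}
    {ρ : Vars (γ₁ + γ₂) → Vars γ} {p : Ideal (Aprim γ)} [hp : p.IsPrime]
    (h : FpolyPrim a γ₁ γ₂ ρ ∈ p) : ∃ v₁ v₂, diff (ρ (inrV v₂)) (ρ (inlV v₁)) ∈ p := by
  simp only [FpolyPrim, Ideal.IsPrime.prod_mem_iff, Finset.mem_univ, true_and] at h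
  obtain ⟨i, j, α₁, α₂, h⟩ := h
  exact ⟨⟨i, α₁⟩, ⟨j, α₂⟩, hp.mem_of_pow_mem _ h⟩

theorem diff_mem_of_Jideal_le {a : I → I → ℕ} {p : Ideal (Aprim γ)} [p.IsPrime]
    (hJp : Jideal a γ ≤ p) (u v : Vars γ) : diff u v ∈ p := by
  by_contra hu
  obtain ⟨γ₁, γ₂, h₁, h₂, h, σ, hl, hr⟩ :=
    exists_perm_separating (P := fun w => diff w v ∈ p) hu (show diff v v ∈ p by simp)
  obtain ⟨v₁, v₂, hmem⟩ :=
    exists_diff_mem_of_FpolyPrim_mem (hJp (Ideal.subset_span (FpolyPrim_mem_Jgen a h₁ h₂ h σ)))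
  refine hl v₁ ?_
  rw [← diff_sub_diff _ _ v] at hmem
  simpa using p.sub_mem (hr v₂) hmem

theorem diff_mem_radical_Jideal (a : I → I → ℕ) (u v : Vars γ) :
    diff u v ∈ (Jideal a γ).radical := by
  rw [Ideal.radical_eq_sInf, Ideal.mem_sInf]
  rintro p ⟨hJp, hp⟩
  exact diff_mem_of_Jideal_le hJp u v

end

theorem Jideal_finite_codimension_general
    (I : Type) [Fintype I] [DecidableEq I] (a : I → I → ℕ)
    (γ : I → ℕ) :
    FiniteDimensional ℚ (↥(Aprim (I := I) γ) ⧸ Jideal a γ) := by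
  have hrad : (Set.range fun p : Vars γ × Vars γ => diff p.1 p.2) ⊆ (Jideal a γ).radical := by
    rintro _ ⟨⟨u, v⟩, rfl⟩
    exact diff_mem_radical_Jideal a u v
  exact Ideal.finite_quotient_of_adjoin_eq_top_of_subset_radical (Set.finite_range _)
    (adjoin_range_diff (γ := γ)) hrad

/-- The ideal `J_γ ⊆ A_γ^{prim}` has finite codimension: the quotient
`A_γ^{prim} / J_γ` is a finite-dimensional `ℚ`-vector space (for a symmetric quiver
with at least one loop at every vertex). -/
theorem Jideal_finite_codimension
    (I : Type) [Fintype I] [DecidableEq I] (a : I → I → ℕ)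
    (hsym : ∀ i j : I, a i j = a j i) (hloops : ∀ i : I, 1 ≤ a i i)
    (γ : I → ℕ) :
    FiniteDimensional ℚ (↥(Aprim (I := I) γ) ⧸ Jideal a γ) :=
  Jideal_finite_codimension_general I a γ
end COHA
end

section
/- Let k be a field of characteristic zero, let m₁,…,m_k ≥ 1 (blocks possibly indexed further by a finite set I within each block), and let A = k[x^{(p)}_{i,α} : 1 ≤ p ≤ k, i ∈ I, 1 ≤ α ≤ m_p^i] be a polynomial ring whose variables are grouped into k blocks. For each p let A_p^{prim} be the subalgebra of the p-th block's polynomial ring generated by all differences x^{(p)}_{j,α₂} − x^{(p)}_{i,α₁} of variables within block p, and let J_p ⊆ A_p^{prim} be an arbitrary ideal of A_p^{prim}. Let J̃ ⊆ A be the ideal J_1·A + … + J_k·A. Then for every 1 ≤ p < q ≤ k and all indices i,j,α₁,α₂, the element x^{(q)}_{j,α₂} − x^{(p)}_{i,α₁} is not a zero divisor in the quotient ring A/J̃. -/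
open MvPolynomial

namespace COHA

/-- The variables of one block: `x_{i,α}`, `i ∈ I`, `1 ≤ α ≤ mI i`. -/
abbrev BVars (I : Type) (mI : I → ℕ) : Type := Σ i : I, Fin (mI i)

/-- All variables, grouped into `n` blocks: `x^{(p)}_{i,α}`. -/
abbrev AVars (n : ℕ) (I : Type) (m : Fin n → I → ℕ) : Type := Σ p : Fin n, BVars I (m p)

/-- The "primitive" subalgebra of a block: generated by all differences of the
variables of that block. -/
noncomputable def AprimB (𝕜 : Type) [Field 𝕜] (I : Type) (mI : I → ℕ) :
    Subalgebra 𝕜 (MvPolynomial (BVars I mI) 𝕜) :=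
  Algebra.adjoin 𝕜 {f | ∃ u v : BVars I mI, f = X u - X v}

/-- Inclusion of the variables of the `p`-th block into all variables. -/
def inclB {n : ℕ} {I : Type} {m : Fin n → I → ℕ} (p : Fin n) :
    BVars I (m p) → AVars n I m :=
  fun v => ⟨p, v⟩

/-- The ideal `J̃ = J₁·A + ⋯ + J_k·A` of the big polynomial ring `A`, generated by the
images of ideals `J p ⊆ A_p^{prim}` of the primitive subalgebras of the blocks. -/
noncomputable def Jtilde (𝕜 : Type) [Field 𝕜] (n : ℕ) (I : Type) (m : Fin n → I → ℕ)
    (J : ∀ p : Fin n, Ideal ↥(AprimB 𝕜 I (m p))) :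
    Ideal (MvPolynomial (AVars n I m) 𝕜) :=
  Ideal.span {h | ∃ (p : Fin n) (g : ↥(AprimB 𝕜 I (m p))), g ∈ J p ∧
    h = rename (inclB p) (g : MvPolynomial (BVars I (m p)) 𝕜)}

set_option maxHeartbeats 2000000 in
set_option synthInstance.maxHeartbeats 200000 in
/-- For any ideals `J_p ⊆ A_p^{prim}` of the primitive subalgebras of the blocks,
the differences `x^{(q)}_{j,α₂} - x^{(p)}_{i,α₁}` of variables from different blocks
(`p < q`) are not zero divisors in `A / (J₁·A + ⋯ + J_k·A)` (over a field of
characteristic zero, each block being nonempty). -/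
theorem cross_difference_nonZeroDivisor_mod_Jtilde
    (𝕜 : Type) [Field 𝕜] [CharZero 𝕜] (n : ℕ) (I : Type) [Fintype I]
    (m : Fin n → I → ℕ) (hm : ∀ p : Fin n, ∃ i : I, 0 < m p i)
    (J : ∀ p : Fin n, Ideal ↥(AprimB 𝕜 I (m p)))
    (p q : Fin n) (hpq : p < q) (i j : I) (α₁ : Fin (m p i)) (α₂ : Fin (m q j))
    (g : MvPolynomial (AVars n I m) 𝕜)
    (hg : (X (⟨q, ⟨j, α₂⟩⟩ : AVars n I m) - X ⟨p, ⟨i, α₁⟩⟩) * g ∈ Jtilde 𝕜 n I m J) :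
    g ∈ Jtilde 𝕜 n I m J := by
  classical
  let Φ : MvPolynomial (AVars n I m) 𝕜 →ₐ[𝕜] Polynomial (MvPolynomial (AVars n I m) 𝕜) :=
    aeval (fun v : AVars n I m =>
      Polynomial.C (X v) + if v.1 = q then Polynomial.X else 0)
  let π : MvPolynomial (AVars n I m) 𝕜 →+*
      MvPolynomial (AVars n I m) 𝕜 ⧸ Jtilde 𝕜 n I m J := Ideal.Quotient.mk _
  let ψ : MvPolynomial (AVars n I m) 𝕜 →+*
      Polynomial (MvPolynomial (AVars n I m) 𝕜 ⧸ Jtilde 𝕜 n I m J) :=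
    (Polynomial.mapRingHom π).comp Φ.toRingHom
  -- Φ sends the generators of Jtilde to constants
  have hΦgen : ∀ (p' : Fin n) (g' : ↥(AprimB 𝕜 I (m p'))),
      Φ (rename (inclB p') (g' : MvPolynomial (BVars I (m p')) 𝕜))
        = Polynomial.C (rename (inclB p') (g' : MvPolynomial (BVars I (m p')) 𝕜)) := by
    intro p' g'
    have key : AprimB 𝕜 I (m p') ≤ AlgHom.equalizer
        (Φ.comp (rename (inclB p')))
        ((IsScalarTower.toAlgHom 𝕜 (MvPolynomial (AVars n I m) 𝕜)
            (Polynomial (MvPolynomial (AVars n I m) 𝕜))).comp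
          ((rename (inclB p') : MvPolynomial (BVars I (m p')) 𝕜 →ₐ[𝕜]
            MvPolynomial (AVars n I m) 𝕜))) := by
      rw [AprimB]
      apply Algebra.adjoin_le
      rintro f ⟨u, v, rfl⟩
      simp only [SetLike.mem_coe, AlgHom.mem_equalizer, AlgHom.comp_apply, map_sub,
        rename_X, IsScalarTower.coe_toAlgHom', Polynomial.algebraMap_eq]
      simp only [Φ, aeval_X, inclB]
      ring
    have h2 := key g'.2
    simp only [AlgHom.mem_equalizer, AlgHom.comp_apply, IsScalarTower.coe_toAlgHom',
      Polynomial.algebraMap_eq] at h2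
    exact h2
  have hsub : {h | ∃ (p' : Fin n) (g' : ↥(AprimB 𝕜 I (m p'))), g' ∈ J p' ∧
      h = rename (inclB p') (g' : MvPolynomial (BVars I (m p')) 𝕜)} ⊆
      ↑(RingHom.ker ψ) := by
    rintro h ⟨p', g', hg', rfl⟩
    have hmem : rename (inclB p') (g' : MvPolynomial (BVars I (m p')) 𝕜)
        ∈ Jtilde 𝕜 n I m J := Ideal.subset_span ⟨p', g', hg', rfl⟩
    simp only [SetLike.mem_coe, RingHom.mem_ker, ψ, RingHom.comp_apply,
      AlgHom.toRingHom_eq_coe, RingHom.coe_coe, hΦgen, Polynomial.coe_mapRingHom,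
      Polynomial.map_C]
    rw [show π (rename (inclB p') (g' : MvPolynomial (BVars I (m p')) 𝕜)) = 0 from
      (Ideal.Quotient.eq_zero_iff_mem).2 hmem, Polynomial.C_0]
  have hker : Jtilde 𝕜 n I m J ≤ RingHom.ker ψ := Ideal.span_le.2 hsub
  have hmul : ψ (X (⟨q, ⟨j, α₂⟩⟩ : AVars n I m) - X ⟨p, ⟨i, α₁⟩⟩) * ψ g = 0 := by
    rw [← map_mul]
    exact hker hg
  have hne : q ≠ p := (ne_of_lt hpq).symm
  have hmonic : (ψ (X (⟨q, ⟨j, α₂⟩⟩ : AVars n I m) - X ⟨p, ⟨i, α₁⟩⟩)).Monic := by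
    have hΦd : Φ (X (⟨q, ⟨j, α₂⟩⟩ : AVars n I m) - X ⟨p, ⟨i, α₁⟩⟩)
        = Polynomial.X + Polynomial.C (X (⟨q, ⟨j, α₂⟩⟩ : AVars n I m)
            - X ⟨p, ⟨i, α₁⟩⟩) := by
      simp only [map_sub, Φ, aeval_X]
      rw [if_pos trivial, if_neg (show ¬ (p = q) from Ne.symm hne)]
      ring
    have hval : ψ (X (⟨q, ⟨j, α₂⟩⟩ : AVars n I m) - X ⟨p, ⟨i, α₁⟩⟩)
        = Polynomial.X + Polynomial.C (π (X (⟨q, ⟨j, α₂⟩⟩ : AVars n I m)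
            - X ⟨p, ⟨i, α₁⟩⟩)) := by
      simp only [ψ, RingHom.comp_apply, AlgHom.toRingHom_eq_coe, RingHom.coe_coe,
        Polynomial.coe_mapRingHom]
      rw [hΦd, Polynomial.map_add, Polynomial.map_X, Polynomial.map_C]
    rw [hval]
    exact Polynomial.monic_X_add_C _
  have hg0 : ψ g = 0 := by
    have hreg := Polynomial.Monic.isRegular hmonic
    have heq : ψ (X (⟨q, ⟨j, α₂⟩⟩ : AVars n I m) - X ⟨p, ⟨i, α₁⟩⟩) * ψ g
        = ψ (X (⟨q, ⟨j, α₂⟩⟩ : AVars n I m) - X ⟨p, ⟨i, α₁⟩⟩) * 0 := by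
      rw [mul_zero, hmul]
    exact hreg.left heq
  have hEval : Polynomial.eval 0 (Φ g) = g := by
    have hE : (Polynomial.evalRingHom (0 : MvPolynomial (AVars n I m) 𝕜)).comp
        Φ.toRingHom = RingHom.id (MvPolynomial (AVars n I m) 𝕜) := by
      apply MvPolynomial.ringHom_ext
      · intro a
        simp [Φ, Polynomial.algebraMap_eq, MvPolynomial.algebraMap_eq]
      · intro v
        by_cases hv : v.1 = q <;> simp [Φ, aeval_X, hv]
    exact congrArg (fun f => f g) hE
  have hmap : Polynomial.map π (Φ g) = 0 := by
    have : ψ g = Polynomial.map π (Φ g) := by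
      simp only [ψ, RingHom.comp_apply, AlgHom.toRingHom_eq_coe, RingHom.coe_coe,
        Polynomial.coe_mapRingHom]
    rw [← this, hg0]
  have h1 : π ((Φ g).coeff 0) = 0 := by
    rw [← Polynomial.coeff_map, hmap, Polynomial.coeff_zero]
  have h2 : (Φ g).coeff 0 = g := by
    rw [Polynomial.coeff_zero_eq_eval_zero, hEval]
  rw [h2] at h1
  exact Ideal.Quotient.eq_zero_iff_mem.1 h1
end COHA
end

section
/- Let Q be any finite quiver, γ₁,γ₂ ∈ ℤ_{≥0}^I. If f₁ ∈ ℋ_{γ₁} is homogeneous of polynomial degree k₁ and f₂ ∈ ℋ_{γ₂} is homogeneous of polynomial degree k₂, then the shuffle product f₁·f₂ ∈ ℋ_{γ₁+γ₂} is homogeneous of polynomial degree k₁ + k₂ − χ_Q(γ₁,γ₂). Consequently, assigning to f ∈ ℋ_γ homogeneous of degree k the bidegree (γ, 2k + χ_Q(γ,γ)) makes ℋ (when Q is symmetric, so that χ_Q is symmetric) a (ℤ_{≥0}^I × ℤ)-graded algebra. -/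
/-!
Clearing denominators, the shuffle product `p` satisfies
`p · ∏_σ D_σ = ∑_σ N_σ · ∏_{τ ≠ σ} D_τ`, where each permuted numerator `N_σ` is homogeneous
of degree `k₁ + k₂ + ∑ a_{ij} γ₁^i γ₂^j` and each permuted denominator `D_σ` is a nonzero
homogeneous polynomial of degree `∑ γ₁^i γ₂^i`. Over a domain, if `p · q` and `q ≠ 0` are
homogeneous then so is `p`, of the difference of the degrees, which here is
`k₁ + k₂ - χ_Q(γ₁, γ₂)`. The bigrading claim is then bilinearity of `χ_Q` and its symmetry for
symmetric `Q`.
-/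

open MvPolynomial

namespace COHA

variable {I : Type} [Fintype I] [DecidableEq I]

/-- `f` is homogeneous of (possibly negative) integer degree `c`. -/
def IsHomogInt {γ : I → ℕ} (f : Amod γ) (c : ℤ) : Prop :=
  ∀ d ∈ f.support, ((d.sum fun _ e => e : ℕ) : ℤ) = c

end COHA

namespace MvPolynomial

variable {σ R : Type*}

attribute [local instance] gradedAlgebra in
theorem homogeneousComponent_add_mul_of_isHomogeneous_right [CommSemiring R]
    {p q : MvPolynomial σ R} {b : ℕ} (hq : q.IsHomogeneous b) (e : ℕ) :
    homogeneousComponent (e + b) (p * q) = homogeneousComponent e p * q := by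
  simpa [← decomposition.decompose'_apply] using
    DirectSum.coe_decompose_mul_add_of_right_mem (homogeneousSubmodule σ R) (i := e) (a := p) hq

theorem degree_add_eq_of_isHomogeneous_mul [CommSemiring R] [NoZeroDivisors R] {p q : MvPolynomial σ R} {b n : ℕ}
    (hq : q.IsHomogeneous b) (hq0 : q ≠ 0) (hpq : (p * q).IsHomogeneous n)
    {d : σ →₀ ℕ} (hd : d ∈ p.support) : d.degree + b = n := by
  have hp : homogeneousComponent d.degree p ≠ 0 := by
    rw [Ne, ← support_eq_empty, support_homogeneousComponent, Finset.filter_eq_empty_iff]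
    exact fun h => h hd rfl
  by_contra hne
  apply mul_ne_zero hp hq0
  rw [← homogeneousComponent_add_mul_of_isHomogeneous_right hq,
    homogeneousComponent_of_mem hpq, if_neg hne]

theorem degree_add_eq_of_algebraMap_eq_sum_div [CommRing R] [IsDomain R] {ι : Type*} [Fintype ι]
    {p : MvPolynomial σ R} {num den : ι → MvPolynomial σ R} {m b : ℕ}
    (hnum : ∀ i, (num i).IsHomogeneous m) (hden : ∀ i, (den i).IsHomogeneous b)
    (hden0 : ∀ i, den i ≠ 0)
    (h : algebraMap _ (FractionRing (MvPolynomial σ R)) p =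
      ∑ i, algebraMap _ _ (num i) / algebraMap _ _ (den i))
    {d : σ →₀ ℕ} (hd : d ∈ p.support) : d.degree + b = m := by
  classical
  set φ := algebraMap (MvPolynomial σ R) (FractionRing (MvPolynomial σ R))
  have hφ : Function.Injective φ := IsFractionRing.injective _ _
  obtain ⟨c, hc⟩ : ∃ c, Fintype.card ι = c + 1 := by
    refine Nat.exists_eq_add_one.mpr (Fintype.card_pos_iff.mpr ?_)
    by_contra hempty
    rw [not_nonempty_iff] at hempty
    simp [Finset.univ_eq_empty, map_eq_zero_iff φ hφ] at h
    simp [h] at hd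
  have hclear : p * ∏ i, den i = ∑ i, num i * ∏ j ∈ Finset.univ.erase i, den j := by
    refine hφ ?_
    rw [map_mul, h, Finset.sum_mul, map_sum]
    refine Finset.sum_congr rfl fun i _ => ?_
    rw [← Finset.mul_prod_erase _ _ (Finset.mem_univ i), map_mul, map_mul, ← mul_assoc,
      div_mul_cancel₀ _ ((map_ne_zero_iff φ hφ).mpr (hden0 i))]
  have hprod : (∏ i, den i).IsHomogeneous ((c + 1) * b) := by
    simpa [Finset.card_univ, hc] using IsHomogeneous.prod Finset.univ _ _ fun i _ => hden i
  have hsum : (p * ∏ i, den i).IsHomogeneous (m + c * b) := by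
    rw [hclear]
    refine IsHomogeneous.sum _ _ _ fun i _ => (hnum i).mul ?_
    simpa [Finset.card_erase_of_mem, hc] using
      IsHomogeneous.prod _ _ _ fun j (_ : j ∈ Finset.univ.erase i) => hden j
  have := degree_add_eq_of_isHomogeneous_mul hprod
    (Finset.prod_ne_zero_iff.mpr fun i _ => hden0 i) hsum hd
  rw [Nat.succ_mul] at this
  omega

end MvPolynomial

namespace COHA

variable {I : Type}

theorem inrV_ne_inlV {γ₁ γ₂ : I → ℕ} (v : Vars γ₂) (w : Vars γ₁) :
    (inrV v : Vars (γ₁ + γ₂)) ≠ inlV w := by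
  obtain ⟨j, β⟩ := v
  obtain ⟨i, α⟩ := w
  intro h
  obtain ⟨rfl, h⟩ := Sigma.mk.inj_iff.mp h
  have := congrArg Fin.val (eq_of_heq h)
  simp only [Fin.val_natAdd, Fin.val_castAdd] at this
  omega

variable [Fintype I]

theorem shuffleDen_ne_zero (γ₁ γ₂ : I → ℕ) : shuffleDen γ₁ γ₂ ≠ 0 := by
  simp [shuffleDen, Finset.prod_ne_zero_iff, sub_eq_zero, X_injective.eq_iff, inrV_ne_inlV]

theorem shuffleDen_isHomogeneous (γ₁ γ₂ : I → ℕ) :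
    (shuffleDen γ₁ γ₂).IsHomogeneous (∑ i, γ₁ i * γ₂ i) := by
  have h : (shuffleDen γ₁ γ₂).IsHomogeneous (∑ i, ∑ _α₁ : Fin (γ₁ i), ∑ _α₂ : Fin (γ₂ i), 1) :=
    IsHomogeneous.prod _ _ _ fun _ _ => IsHomogeneous.prod _ _ _ fun _ _ =>
      IsHomogeneous.prod _ _ _ fun _ _ => (isHomogeneous_X _ _).sub (isHomogeneous_X _ _)
  simpa using h

theorem shuffleNum_isHomogeneous (a : I → I → ℕ) (γ₁ γ₂ : I → ℕ) :
    (shuffleNum a γ₁ γ₂).IsHomogeneous (∑ i, ∑ j, a i j * γ₁ i * γ₂ j) := by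
  have h : (shuffleNum a γ₁ γ₂).IsHomogeneous
      (∑ i, ∑ j, ∑ _α₁ : Fin (γ₁ i), ∑ _α₂ : Fin (γ₂ j), 1 * a i j) :=
    IsHomogeneous.prod _ _ _ fun _ _ => IsHomogeneous.prod _ _ _ fun _ _ =>
      IsHomogeneous.prod _ _ _ fun _ _ => IsHomogeneous.prod _ _ _ fun _ _ =>
        ((isHomogeneous_X _ _).sub (isHomogeneous_X _ _)).pow _
  simpa [mul_comm, mul_left_comm] using h

theorem chi_eq_sub (a : I → I → ℕ) (γ₁ γ₂ : I → ℕ) :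
    chi a γ₁ γ₂ = ((∑ i, γ₁ i * γ₂ i : ℕ) : ℤ) - ((∑ i, ∑ j, a i j * γ₁ i * γ₂ j : ℕ) : ℤ) := by
  push_cast [chi]; rfl

theorem chi_add_left (a : I → I → ℕ) (γ₁ γ₂ γ : I → ℕ) :
    chi a (γ₁ + γ₂) γ = chi a γ₁ γ + chi a γ₂ γ := by
  simp only [chi, Pi.add_apply, Nat.cast_add, add_mul, mul_add, Finset.sum_add_distrib]
  ring

theorem chi_add_right (a : I → I → ℕ) (γ γ₁ γ₂ : I → ℕ) :
    chi a γ (γ₁ + γ₂) = chi a γ γ₁ + chi a γ γ₂ := by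
  simp only [chi, Pi.add_apply, Nat.cast_add, mul_add, Finset.sum_add_distrib]
  ring

theorem chi_comm {a : I → I → ℕ} (ha : ∀ i j, a i j = a j i) (γ₁ γ₂ : I → ℕ) :
    chi a γ₁ γ₂ = chi a γ₂ γ₁ := by
  unfold chi
  refine congrArg₂ (· - ·) (Finset.sum_congr rfl fun i _ => mul_comm _ _) ?_
  rw [Finset.sum_comm]
  exact Finset.sum_congr rfl fun i _ => Finset.sum_congr rfl fun j _ => by rw [ha]; ring

variable [DecidableEq I]

open Classical in
theorem shuffleSum_eq_sum_div (a : I → I → ℕ) (γ₁ γ₂ : I → ℕ) (f₁ : Amod γ₁) (f₂ : Amod γ₂) :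
    shuffleSum a γ₁ γ₂ f₁ f₂ = ∑ σ : ∀ i, Equiv.Perm (Fin (γ₁ i + γ₂ i)),
      algebraMap (Amod (γ₁ + γ₂)) _ (if ∀ i, IsShuffle (γ₁ i) (γ₂ i) (σ i) then
          rename (permEquiv σ) (rename inlV f₁ * rename inrV f₂ * shuffleNum a γ₁ γ₂) else 0) /
        algebraMap (Amod (γ₁ + γ₂)) _ (rename (permEquiv σ) (shuffleDen γ₁ γ₂)) := by
  refine Finset.sum_congr rfl fun σ _ => ?_
  split_ifs <;> simp

theorem shuffleMul_isHomogInt (a : I → I → ℕ) {γ₁ γ₂ : I → ℕ} {f₁ : Amod γ₁} {f₂ : Amod γ₂}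
    {k₁ k₂ : ℕ} (hf₁ : f₁.IsHomogeneous k₁) (hf₂ : f₂.IsHomogeneous k₂) :
    IsHomogInt (shuffleMul a f₁ f₂) (k₁ + k₂ - chi a γ₁ γ₂) := by
  intro d hd
  rw [shuffleMul] at hd
  split_ifs at hd with hex
  · have hdeg : d.degree + ∑ i, γ₁ i * γ₂ i = k₁ + k₂ + ∑ i, ∑ j, a i j * γ₁ i * γ₂ j := by
      refine degree_add_eq_of_algebraMap_eq_sum_div (fun σ => ?_) (fun σ => ?_) (fun σ => ?_)
        (hex.choose_spec.trans (shuffleSum_eq_sum_div a γ₁ γ₂ f₁ f₂)) hd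
      · split_ifs
        · exact ((hf₁.rename_isHomogeneous.mul hf₂.rename_isHomogeneous).mul
            (shuffleNum_isHomogeneous a γ₁ γ₂)).rename_isHomogeneous
        · exact isHomogeneous_zero _ _ _
      · exact (shuffleDen_isHomogeneous γ₁ γ₂).rename_isHomogeneous
      · exact (map_ne_zero_iff _ (rename_injective _ (permEquiv σ).injective)).mpr
          (shuffleDen_ne_zero γ₁ γ₂)
    rw [chi_eq_sub]
    change (d.degree : ℤ) = _
    omega
  · simp at hd

theorem shuffleMul_isHomogeneous_general
    (I : Type) [Fintype I] [DecidableEq I] (a : I → I → ℕ)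
    (γ₁ γ₂ : I → ℕ) (f₁ : Amod γ₁) (f₂ : Amod γ₂)
    (k₁ k₂ : ℕ)
    (hh₁ : MvPolynomial.IsHomogeneous f₁ k₁) (hh₂ : MvPolynomial.IsHomogeneous f₂ k₂) :
    IsHomogInt (shuffleMul a f₁ f₂) ((k₁ : ℤ) + (k₂ : ℤ) - chi a γ₁ γ₂) ∧
    ((∀ i j : I, a i j = a j i) →
      2 * ((k₁ : ℤ) + (k₂ : ℤ) - chi a γ₁ γ₂) + chi a (γ₁ + γ₂) (γ₁ + γ₂) =
        (2 * (k₁ : ℤ) + chi a γ₁ γ₁) + (2 * (k₂ : ℤ) + chi a γ₂ γ₂)) := by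
  refine ⟨shuffleMul_isHomogInt a hh₁ hh₂, fun ha => ?_⟩
  rw [chi_add_left, chi_add_right, chi_add_right, chi_comm ha γ₂ γ₁]
  ring

/-- If `f₁ ∈ ℋ_{γ₁}` is homogeneous of degree `k₁` and `f₂ ∈ ℋ_{γ₂}` is homogeneous of
degree `k₂`, then the shuffle product `f₁ · f₂` is homogeneous of degree
`k₁ + k₂ - χ_Q(γ₁,γ₂)`.  Consequently (for symmetric `Q`), assigning to homogeneous
`f ∈ ℋ_γ` of degree `k` the bidegree `(γ, 2k + χ_Q(γ,γ))` makes `ℋ` a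
`(ℤ_{≥0}^I × ℤ)`-graded algebra: the second claim is the arithmetic compatibility
`2(k₁ + k₂ - χ_Q(γ₁,γ₂)) + χ_Q(γ₁+γ₂,γ₁+γ₂) = (2k₁ + χ_Q(γ₁,γ₁)) + (2k₂ + χ_Q(γ₂,γ₂))`. -/
theorem shuffleMul_isHomogeneous
    (I : Type) [Fintype I] [DecidableEq I] (a : I → I → ℕ)
    (γ₁ γ₂ : I → ℕ) (f₁ : Amod γ₁) (f₂ : Amod γ₂)
    (h₁ : IsSym f₁) (h₂ : IsSym f₂) (k₁ k₂ : ℕ)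
    (hh₁ : MvPolynomial.IsHomogeneous f₁ k₁) (hh₂ : MvPolynomial.IsHomogeneous f₂ k₂) :
    IsHomogInt (shuffleMul a f₁ f₂) ((k₁ : ℤ) + (k₂ : ℤ) - chi a γ₁ γ₂) ∧
    ((∀ i j : I, a i j = a j i) →
      2 * ((k₁ : ℤ) + (k₂ : ℤ) - chi a γ₁ γ₂) + chi a (γ₁ + γ₂) (γ₁ + γ₂) =
        (2 * (k₁ : ℤ) + chi a γ₁ γ₁) + (2 * (k₂ : ℤ) + chi a γ₂ γ₂)) :=
  shuffleMul_isHomogeneous_general I a γ₁ γ₂ f₁ f₂ k₁ k₂ hh₁ hh₂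
end COHA
end

section
/- Let Q be a finite symmetric quiver, γ,γ' ∈ ℤ_{≥0}^I, f ∈ ℋ_γ, f' ∈ ℋ_{γ'}. Then the shuffle products satisfy f·f' = (−1)^{χ_Q(γ,γ')} f'·f. -/
open MvPolynomial

/-!
Swapping the two blocks of variables turns a tuple of `(γ', γ)`-shuffles into a tuple of
`(γ, γ')`-shuffles, and matches the summands of `f' · f` with those of `f · f'`. Under the swap
every factor `x'' - x'` of the kernel changes sign, so the numerator picks up
`(-1)^{Σ a_ij γ^i γ'^j}` (using `a_ij = a_ji`) and the denominator `(-1)^{Σ γ^i γ'^i}`; their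
quotient is `(-1)^{χ_Q(γ,γ')}`. The identity therefore already holds between the rational
shuffle sums, and transfers to the polynomials representing them.
-/

namespace Equiv.Perm

/-- The source is reordered by `finAddFlip`, the target only recast: this matches `castA`,
which identifies variables of `A_{γ'+γ}` and `A_{γ+γ'}` index by index. -/
def flipBlocks {m n : ℕ} : Perm (Fin (m + n)) ≃ Perm (Fin (n + m)) :=
  equivCongr finAddFlip.symm (finCongr (Nat.add_comm m n))

lemma flipBlocks_apply {m n : ℕ} (τ : Perm (Fin (m + n))) (x : Fin (n + m)) :
    flipBlocks τ x = Fin.cast (Nat.add_comm m n) (τ (finAddFlip x)) := rfl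

end Equiv.Perm

lemma Finset.prod_prod_sub_pow_comm {R α β : Type*} [CommRing R] [Fintype α] [Fintype β]
    (u : β → R) (v : α → R) (k : ℕ) :
    ∏ x, ∏ y, (u y - v x) ^ k =
      (-1) ^ (k * Fintype.card α * Fintype.card β) * ∏ y, ∏ x, (v x - u y) ^ k := by
  have hswap : ∀ x y, (u y - v x) ^ k = (-1) ^ k * (v x - u y) ^ k := fun x y => by
    rw [← neg_sub, neg_pow]
  simp only [hswap, Finset.prod_mul_distrib, Finset.prod_const, Finset.card_univ, ← pow_mul]
  rw [Finset.prod_comm]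
  ring

namespace COHA

open Equiv.Perm

lemma isShuffle_flipBlocks_iff {m n : ℕ} (τ : Equiv.Perm (Fin (m + n))) :
    IsShuffle n m (flipBlocks τ) ↔ IsShuffle m n τ := by
  simp only [IsShuffle, flipBlocks_apply, finAddFlip_apply_castAdd, finAddFlip_apply_natAdd,
    Fin.cast_lt_cast]
  exact and_comm

section

variable {I : Type} {γ γ' : I → ℕ}

def flipVars (γ γ' : I → ℕ) : Vars (γ' + γ) ≃ Vars (γ + γ') :=
  Equiv.sigmaCongrRight fun i => (finAddFlip : Fin (γ i + γ' i) ≃ Fin (γ' i + γ i)).symm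

lemma flipVars_comp_inlV : flipVars γ γ' ∘ inlV = inrV := by
  funext ⟨i, x⟩
  simp [flipVars, inlV, inrV, Equiv.symm_apply_eq]

lemma flipVars_comp_inrV : flipVars γ γ' ∘ inrV = inlV := by
  funext ⟨i, x⟩
  simp [flipVars, inlV, inrV, Equiv.symm_apply_eq]

lemma castV_comp_permEquiv (τ : ∀ i, Equiv.Perm (Fin (γ' i + γ i))) :
    castV (add_comm γ' γ) ∘ permEquiv τ =
      permEquiv (γ := γ + γ') (fun i => flipBlocks (τ i)) ∘ flipVars γ γ' := by
  funext ⟨i, x⟩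
  simp [castV, permEquiv, flipVars, flipBlocks_apply]

lemma castA_rename_permEquiv (τ : ∀ i, Equiv.Perm (Fin (γ' i + γ i))) (p : Amod (γ' + γ)) :
    castA (add_comm γ' γ) (rename (permEquiv τ) p) =
      rename (permEquiv (γ := γ + γ') fun i => flipBlocks (τ i)) (rename (flipVars γ γ') p) := by
  rw [castA, rename_rename, rename_rename, castV_comp_permEquiv]

noncomputable def castFrac {γ₁ γ₂ : I → ℕ} (h : γ₁ = γ₂) :
    FractionRing (Amod γ₁) ≃+* FractionRing (Amod γ₂) :=
  IsFractionRing.ringEquivOfRingEquiv (renameEquiv ℚ (castV h)).toRingEquiv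

lemma castFrac_algebraMap {γ₁ γ₂ : I → ℕ} (h : γ₁ = γ₂) (p : Amod γ₁) :
    castFrac h (algebraMap _ _ p) = algebraMap _ _ (castA h p) :=
  IsFractionRing.ringEquivOfRingEquiv_algebraMap _ p

variable [Fintype I]

lemma rename_flipVars_shuffleNum {a : I → I → ℕ} (hsym : ∀ i j, a i j = a j i) :
    rename (flipVars γ γ') (shuffleNum a γ' γ) =
      (-1) ^ (∑ i, ∑ j, a i j * γ i * γ' j) * shuffleNum a γ γ' := by
  simp only [shuffleNum, map_prod, map_pow, map_sub, rename_X,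
    ← Function.comp_apply (f := flipVars γ γ'), flipVars_comp_inlV, flipVars_comp_inrV]
  have hij : ∀ i j, ∏ x : Fin (γ' j), ∏ y : Fin (γ i),
      (X (inlV ⟨i, y⟩) - X (inrV ⟨j, x⟩) : Amod (γ + γ')) ^ a j i =
        (-1) ^ (a i j * γ i * γ' j) *
          ∏ y : Fin (γ i), ∏ x : Fin (γ' j), (X (inrV ⟨j, x⟩) - X (inlV ⟨i, y⟩)) ^ a i j := by
    intro i j
    rw [Finset.prod_prod_sub_pow_comm, Fintype.card_fin, Fintype.card_fin, hsym j i, mul_right_comm]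
  rw [Finset.prod_comm]
  simp only [hij, Finset.prod_mul_distrib, Finset.prod_pow_eq_pow_sum]

lemma rename_flipVars_shuffleDen :
    rename (flipVars γ γ') (shuffleDen γ' γ) = (-1) ^ (∑ i, γ i * γ' i) * shuffleDen γ γ' := by
  simp only [shuffleDen, map_prod, map_sub, rename_X,
    ← Function.comp_apply (f := flipVars γ γ'), flipVars_comp_inlV, flipVars_comp_inrV]
  have hi : ∀ i, ∏ x : Fin (γ' i), ∏ y : Fin (γ i),
      (X (inlV ⟨i, y⟩) - X (inrV ⟨i, x⟩) : Amod (γ + γ')) =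
        (-1) ^ (γ i * γ' i) *
          ∏ y : Fin (γ i), ∏ x : Fin (γ' i), (X (inrV ⟨i, x⟩) - X (inlV ⟨i, y⟩)) :=
    fun i => by
      simpa [mul_comm] using Finset.prod_prod_sub_pow_comm (R := Amod (γ + γ'))
        (fun y : Fin (γ i) => X (inlV ⟨i, y⟩)) (fun x : Fin (γ' i) => X (inrV ⟨i, x⟩)) 1
  simp only [hi, Finset.prod_mul_distrib, Finset.prod_pow_eq_pow_sum]

lemma rename_flipVars_shuffleNumerator {a : I → I → ℕ} (hsym : ∀ i j, a i j = a j i)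
    (f : Amod γ) (f' : Amod γ') :
    rename (flipVars γ γ') (rename inlV f' * rename inrV f * shuffleNum a γ' γ) =
      (-1) ^ (∑ i, ∑ j, a i j * γ i * γ' j) *
        (rename inlV f * rename inrV f' * shuffleNum a γ γ') := by
  rw [map_mul, map_mul, rename_rename, rename_rename, flipVars_comp_inlV, flipVars_comp_inrV,
    rename_flipVars_shuffleNum hsym]
  ring

lemma neg_one_zpow_chi (K : Type*) [DivisionRing K] (a : I → I → ℕ) :
    (-1 : K) ^ chi a γ γ' = (-1) ^ (∑ i, γ i * γ' i + ∑ i, ∑ j, a i j * γ i * γ' j) := by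
  have hchi : chi a γ γ' = ((∑ i, γ i * γ' i + ∑ i, ∑ j, a i j * γ i * γ' j : ℕ) : ℤ) -
      2 * ((∑ i, ∑ j, a i j * γ i * γ' j : ℕ) : ℤ) := by
    push_cast [chi]
    ring
  rw [hchi, zpow_sub₀ (neg_ne_zero.2 one_ne_zero), (even_two_mul _).neg_one_zpow, div_one,
    zpow_natCast]

noncomputable def shuffleTerm (a : I → I → ℕ) (γ₁ γ₂ : I → ℕ) (f₁ : Amod γ₁) (f₂ : Amod γ₂)
    (σ : ∀ i, Equiv.Perm (Fin (γ₁ i + γ₂ i))) : FractionRing (Amod (γ₁ + γ₂)) :=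
  algebraMap _ _ (rename (permEquiv (γ := γ₁ + γ₂) σ)
      (rename inlV f₁ * rename inrV f₂ * shuffleNum a γ₁ γ₂)) /
    algebraMap _ _ (rename (permEquiv (γ := γ₁ + γ₂) σ) (shuffleDen γ₁ γ₂))

lemma shuffleTerm_flipBlocks {a : I → I → ℕ} (hsym : ∀ i j, a i j = a j i)
    (f : Amod γ) (f' : Amod γ') (τ : ∀ i, Equiv.Perm (Fin (γ' i + γ i))) :
    shuffleTerm a γ γ' f f' (fun i => flipBlocks (τ i)) =
      (-1) ^ chi a γ γ' * castFrac (add_comm γ' γ) (shuffleTerm a γ' γ f' f τ) := by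
  rw [shuffleTerm, shuffleTerm, map_div₀, castFrac_algebraMap, castFrac_algebraMap,
    castA_rename_permEquiv, castA_rename_permEquiv, rename_flipVars_shuffleNumerator hsym,
    rename_flipVars_shuffleDen, neg_one_zpow_chi]
  simp only [map_mul _ ((-1 : Amod (γ + γ')) ^ _), map_pow, map_neg, map_one]
  generalize algebraMap (Amod (γ + γ')) (FractionRing (Amod (γ + γ')))
    (rename _ (shuffleDen γ γ')) = d
  generalize algebraMap (Amod (γ + γ')) (FractionRing (Amod (γ + γ'))) (rename _ _) = n
  have hsign : ∀ D S : ℕ,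
      (-1 : FractionRing (Amod (γ + γ'))) ^ (D + S) * ((-1) ^ S / (-1) ^ D) = 1 :=
    fun D S => by
      rw [div_eq_mul_inv, ← inv_pow, inv_neg_one, ← pow_add, ← pow_add]
      exact Even.neg_one_pow ⟨D + S, by ring⟩
  rw [mul_div_mul_comm, ← mul_assoc, hsign, one_mul]

variable [DecidableEq I]

open Classical in
lemma shuffleSum_eq_sum_shuffleTerm (a : I → I → ℕ) (γ₁ γ₂ : I → ℕ)
    (f₁ : Amod γ₁) (f₂ : Amod γ₂) :
    shuffleSum a γ₁ γ₂ f₁ f₂ = ∑ σ : ∀ i, Equiv.Perm (Fin (γ₁ i + γ₂ i)),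
      if ∀ i, IsShuffle (γ₁ i) (γ₂ i) (σ i) then shuffleTerm a γ₁ γ₂ f₁ f₂ σ else 0 := rfl

lemma shuffleSum_eq_neg_one_zpow_mul {a : I → I → ℕ} (hsym : ∀ i j, a i j = a j i)
    (f : Amod γ) (f' : Amod γ') :
    shuffleSum a γ γ' f f' =
      (-1) ^ chi a γ γ' * castFrac (add_comm γ' γ) (shuffleSum a γ' γ f' f) := by
  classical
  rw [shuffleSum_eq_sum_shuffleTerm, shuffleSum_eq_sum_shuffleTerm, map_sum, Finset.mul_sum]
  refine (Fintype.sum_equiv (Equiv.piCongrRight fun i => flipBlocks) _ _ fun τ => ?_).symm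
  have hτ : (Equiv.piCongrRight fun i => flipBlocks) τ = fun i => flipBlocks (τ i) := rfl
  simp only [hτ, isShuffle_flipBlocks_iff, shuffleTerm_flipBlocks hsym, apply_ite (castFrac _),
    map_zero, mul_ite, mul_zero]

lemma algebraMap_smul_castA_eq_shuffleSum {a : I → I → ℕ} (hsym : ∀ i j, a i j = a j i)
    {f : Amod γ} {f' : Amod γ'} {p : Amod (γ' + γ)}
    (hp : algebraMap _ (FractionRing (Amod (γ' + γ))) p = shuffleSum a γ' γ f' f) :
    algebraMap _ (FractionRing (Amod (γ + γ')))
        ((-1 : ℚ) ^ chi a γ γ' • castA (add_comm γ' γ) p) =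
      shuffleSum a γ γ' f f' := by
  rw [shuffleSum_eq_neg_one_zpow_mul hsym, ← hp, castFrac_algebraMap, Algebra.smul_def,
    map_mul, ← IsScalarTower.algebraMap_apply, map_zpow₀, map_neg, map_one]

lemma shuffleMul_eq_of_algebraMap_eq {a : I → I → ℕ} {γ₁ γ₂ : I → ℕ} {f₁ : Amod γ₁}
    {f₂ : Amod γ₂} {p : Amod (γ₁ + γ₂)}
    (hp : algebraMap _ (FractionRing (Amod (γ₁ + γ₂))) p = shuffleSum a γ₁ γ₂ f₁ f₂) :
    shuffleMul a f₁ f₂ = p := by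
  have hex : ∃ q : Amod (γ₁ + γ₂), algebraMap _ (FractionRing (Amod (γ₁ + γ₂))) q =
      shuffleSum a γ₁ γ₂ f₁ f₂ := ⟨p, hp⟩
  rw [shuffleMul, dif_pos hex]
  exact IsFractionRing.injective _ (FractionRing (Amod (γ₁ + γ₂)))
    (hex.choose_spec.trans hp.symm)

end

theorem shuffleMul_sign_comm_general
    (I : Type) [Fintype I] [DecidableEq I] (a : I → I → ℕ)
    (hsym : ∀ i j : I, a i j = a j i)
    (γ γ' : I → ℕ) (f : Amod γ) (f' : Amod γ') :
    shuffleMul a f f' =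
      ((-1 : ℚ) ^ (chi a γ γ')) • castA (add_comm γ' γ) (shuffleMul a f' f) := by
  by_cases hex : ∃ p : Amod (γ' + γ),
      algebraMap _ (FractionRing (Amod (γ' + γ))) p = shuffleSum a γ' γ f' f
  · obtain ⟨p, hp⟩ := hex
    rw [shuffleMul_eq_of_algebraMap_eq hp,
      shuffleMul_eq_of_algebraMap_eq (algebraMap_smul_castA_eq_shuffleSum hsym hp)]
  · -- the relation between the shuffle sums also holds with `f` and `f'` exchanged
    have hex' : ¬∃ q : Amod (γ + γ'),
        algebraMap _ (FractionRing (Amod (γ + γ'))) q = shuffleSum a γ γ' f f' :=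
      fun ⟨q, hq⟩ => hex ⟨_, algebraMap_smul_castA_eq_shuffleSum hsym hq⟩
    rw [shuffleMul, dif_neg hex', shuffleMul, dif_neg hex, castA, map_zero, smul_zero]

/-- **Sign-commutativity of the COHA of a symmetric quiver:**
`f · f' = (-1)^{χ_Q(γ,γ')} f' · f` (up to the canonical identification
`A_{γ'+γ} ≅ A_{γ+γ'}`). -/
theorem shuffleMul_sign_comm
    (I : Type) [Fintype I] [DecidableEq I] (a : I → I → ℕ)
    (hsym : ∀ i j : I, a i j = a j i)
    (γ γ' : I → ℕ) (f : Amod γ) (f' : Amod γ')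
    (h : IsSym f) (h' : IsSym f') :
    shuffleMul a f f' =
      ((-1 : ℚ) ^ (chi a γ γ')) • castA (add_comm γ' γ) (shuffleMul a f' f) :=
  shuffleMul_sign_comm_general I a hsym γ γ' f f'
end COHA
end
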